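/- arXiv:1110.3572 — 5 statements merged into one kernel-verified Lean document; each statement's English description precedes it below -/
import Mathlib

section
/- Let (Ω, ℱ, P) be a probability space, (𝒢_n) a sequence of sub-σ-algebras of ℱ, and (U_n), (V_n) sequences of almost surely strictly positive real random variables such that: V_n is 𝒢_n-measurable for each n; each U_n and each U_n/V_n is integrable; U_n/V_n → 1 in probability; the family {U_n : n ∈ ℕ} is uniformly integrable; the sequence (U_n) is bounded in probability; and the sequence (1/V_n) is bounded in probability. Then E[U_n/V_n | 𝒢_n] → 1 in probability as n → ∞. -/
/-!
Write `R = U / V` and split `R - 1 = (min R 2 - 1) + V⁻¹ (U - 2V)⁺`. The first summand is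
bounded by `1` (as `R > 0`) and by `|R - 1|`, so it tends to `0` in probability and hence in
`L¹`. The second numerator `(U - 2V)⁺` is dominated by the uniformly integrable `|U|` and
vanishes outside `{|R - 1| > 1}`, so it also tends to `0` in `L¹`. Conditional expectation
contracts `L¹`, and `V` is `𝒢`-measurable, so
`E[R | 𝒢] - 1 = E[min R 2 - 1 | 𝒢] + V⁻¹ E[(U - 2V)⁺ | 𝒢]`
is the sum of a term tending to `0` in `L¹` and a product of a sequence bounded in probability
with one tending to `0` in `L¹`; both tend to `0` in probability.
-/

open MeasureTheory Filter Topology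

lemma abs_min_two_sub_one_le (r : ℝ) : |min r 2 - 1| ≤ |r - 1| := by
  rcases le_total r 2 with h | h
  · rw [min_eq_left h]
  · rw [min_eq_right h, abs_of_nonneg (by linarith : (0 : ℝ) ≤ r - 1)]
    norm_num
    linarith

lemma abs_min_two_sub_one_le_one {r : ℝ} (hr : 0 ≤ r) : |min r 2 - 1| ≤ 1 :=
  abs_le.2 ⟨by linarith [le_min hr zero_le_two], by linarith [min_le_right r 2]⟩

lemma max_sub_two_mul_le_abs {u v : ℝ} (hv : 0 ≤ v) : max (u - 2 * v) 0 ≤ |u| :=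
  max_le (by linarith [le_abs_self u]) (abs_nonneg u)

lemma one_lt_abs_div_sub_one_of_max_ne_zero {u v : ℝ} (hv : 0 < v) (h : max (u - 2 * v) 0 ≠ 0) :
    1 < |u / v - 1| := by
  have h2v : 2 * v < u := by
    by_contra! hle
    exact h (max_eq_right (by linarith))
  have : 2 < u / v := (lt_div_iff₀ hv).2 (by linarith)
  exact lt_abs.2 (Or.inl (by linarith))

lemma div_sub_one_sub_min_div_two {u v : ℝ} (hv : 0 < v) :
    u / v - 1 - (min (u / v) 2 - 1) = 1 / v * max (u - 2 * v) 0 := by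
  have hscale : 1 / v * (u - 2 * v) = u / v - 2 := by field_simp
  rw [mul_max_of_nonneg _ _ (by positivity), mul_zero, hscale]
  rcases le_total (u / v) 2 with h | h
  · rw [min_eq_left h, max_eq_right (by linarith)]
    ring
  · rw [min_eq_right h, max_eq_left (by linarith)]
    ring

section

variable {Ω ι : Type*} {m0 : MeasurableSpace Ω} {μ : Measure Ω} {l : Filter ι}

namespace MeasureTheory

def BoundedInProbability (μ : Measure Ω) (X : ι → Ω → ℝ) : Prop :=
  ∀ ε > (0 : ℝ), ∃ M > (0 : ℝ), ∀ i, μ {ω | M < |X i ω|} < ENNReal.ofReal ε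

lemma tendstoInMeasure_zero_iff_abs {X : ι → Ω → ℝ} :
    TendstoInMeasure μ X l 0 ↔
      ∀ ε > (0 : ℝ), Tendsto (fun i => μ {ω | ε ≤ |X i ω|}) l (𝓝 0) := by
  simp [tendstoInMeasure_iff_norm]

lemma tendstoInMeasure_zero_iff_lt_abs {X : ι → Ω → ℝ} :
    TendstoInMeasure μ X l 0 ↔
      ∀ ε > (0 : ℝ), Tendsto (fun i => μ {ω | ε < |X i ω|}) l (𝓝 0) := by
  rw [tendstoInMeasure_zero_iff_abs]
  refine ⟨fun h ε hε => ?_, fun h ε hε => ?_⟩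
  · refine tendsto_of_tendsto_of_tendsto_of_le_of_le tendsto_const_nhds (h ε hε)
      (fun _ => zero_le) fun i => measure_mono fun ω (hω : ε < _) => hω.le
  · refine tendsto_of_tendsto_of_tendsto_of_le_of_le tendsto_const_nhds (h (ε / 2) (by positivity))
      (fun _ => zero_le) fun i => measure_mono fun ω (hω : ε ≤ _) => ?_
    show ε / 2 < _
    linarith

lemma TendstoInMeasure.of_abs_le {X Y : ι → Ω → ℝ} (hX : TendstoInMeasure μ X l 0)
    (hYX : ∀ i, ∀ᵐ ω ∂μ, |Y i ω| ≤ |X i ω|) : TendstoInMeasure μ Y l 0 := by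
  rw [tendstoInMeasure_zero_iff_abs] at hX ⊢
  refine fun ε hε => tendsto_of_tendsto_of_tendsto_of_le_of_le tendsto_const_nhds (hX ε hε)
    (fun _ => zero_le) fun i => measure_mono_ae ?_
  filter_upwards [hYX i] with ω hω (h : ε ≤ _)
  exact h.trans hω

lemma tendstoInMeasure_zero_of_ae_support_subset {Y : ι → Ω → ℝ} {s : ι → Set Ω}
    (hYs : ∀ i, ∀ᵐ ω ∂μ, Y i ω ≠ 0 → ω ∈ s i) (hs : Tendsto (fun i => μ (s i)) l (𝓝 0)) :
    TendstoInMeasure μ Y l 0 := by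
  rw [tendstoInMeasure_zero_iff_abs]
  refine fun ε hε => tendsto_of_tendsto_of_tendsto_of_le_of_le tendsto_const_nhds hs
    (fun _ => zero_le) fun i => measure_mono_ae ?_
  filter_upwards [hYs i] with ω hω (h : ε ≤ _)
  exact hω (abs_pos.1 (hε.trans_le h))

protected lemma TendstoInMeasure.add {E : Type*} [SeminormedAddCommGroup E]
    {f f' : ι → Ω → E} {g g' : Ω → E} (hf : TendstoInMeasure μ f l g)
    (hf' : TendstoInMeasure μ f' l g') : TendstoInMeasure μ (f + f') l (g + g') := by
  rw [tendstoInMeasure_iff_norm] at hf hf' ⊢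
  intro ε hε
  have hsum := (hf (ε / 2) (by positivity)).add (hf' (ε / 2) (by positivity))
  rw [add_zero] at hsum
  refine tendsto_of_tendsto_of_tendsto_of_le_of_le tendsto_const_nhds hsum
    (fun _ => zero_le) fun i => (measure_mono fun ω (hω : ε ≤ _) => ?_).trans
      (measure_union_le _ _)
  by_contra! hlt
  simp only [Set.mem_union, Set.mem_ofPred_eq, not_or, not_le] at hlt
  have := norm_add_le (f i ω - g ω) (f' i ω - g' ω)
  simp only [Pi.add_apply] at hω
  rw [add_sub_add_comm] at hω
  linarith

lemma TendstoInMeasure.mul_of_boundedInProbability [IsFiniteMeasure μ] {X Y : ι → Ω → ℝ}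
    (hX : BoundedInProbability μ X) (hY : TendstoInMeasure μ Y l 0) :
    TendstoInMeasure μ (fun i ω => X i ω * Y i ω) l 0 := by
  rw [tendstoInMeasure_iff_measureReal_norm] at hY ⊢
  intro ε hε
  rw [Metric.tendsto_nhds]
  intro η hη
  obtain ⟨M, hM, hXM⟩ := hX (η / 2) (by positivity)
  filter_upwards [(Metric.tendsto_nhds.1 (hY (ε / M) (by positivity))) (η / 2) (by positivity)]
    with i hi
  simp only [Pi.zero_apply, sub_zero, Real.norm_eq_abs, Real.dist_eq, abs_of_nonneg
    measureReal_nonneg] at hi ⊢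
  have hsub : {ω | ε ≤ |X i ω * Y i ω|} ⊆ {ω | M < |X i ω|} ∪ {ω | ε / M ≤ |Y i ω|} := by
    intro ω (hω : ε ≤ _)
    by_contra! h
    simp only [Set.mem_union, Set.mem_ofPred_eq, not_or, not_lt, not_le] at h
    rw [abs_mul] at hω
    have := (lt_div_iff₀ hM).1 h.2
    nlinarith [abs_nonneg (Y i ω)]
  have hXi : μ.real {ω | M < |X i ω|} < η / 2 :=
    ENNReal.toReal_lt_of_lt_ofReal (hXM i)
  calc μ.real {ω | ε ≤ |X i ω * Y i ω|}
      ≤ μ.real {ω | M < |X i ω|} + μ.real {ω | ε / M ≤ |Y i ω|} :=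
        (measureReal_mono hsub).trans (measureReal_union_le _ _)
    _ < η := by linarith

lemma tendstoInMeasure_of_tendsto_integral_abs {Y : ι → Ω → ℝ} (hY : ∀ i, Integrable (Y i) μ)
    (hlim : Tendsto (fun i => ∫ ω, |Y i ω| ∂μ) l (𝓝 0)) : TendstoInMeasure μ Y l 0 := by
  refine tendstoInMeasure_of_tendsto_eLpNorm one_ne_zero (fun i => (hY i).aestronglyMeasurable)
    aestronglyMeasurable_zero ?_
  have hL1 : ∀ i, eLpNorm (Y i - 0) 1 μ = ENNReal.ofReal (∫ ω, |Y i ω| ∂μ) := fun i => by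
    rw [sub_zero, eLpNorm_one_eq_lintegral_enorm, ← ofReal_integral_norm_eq_lintegral_enorm (hY i)]
    rfl
  simpa only [hL1, ENNReal.ofReal_zero] using ENNReal.tendsto_ofReal hlim

lemma integral_le_setIntegral_abs_add [IsFiniteMeasure μ] {Y U : Ω → ℝ} (hY : Integrable Y μ)
    (hU : Integrable U μ) (hYU : ∀ᵐ ω ∂μ, Y ω ≤ |U ω|) {δ L : ℝ} (hδ : 0 ≤ δ) (hL : 0 ≤ L) :
    ∫ ω, Y ω ∂μ ≤ ∫ ω in {ω | L < |U ω|}, |U ω| ∂μ + δ * μ.real Set.univ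
      + L * μ.real {ω | δ < Y ω} := by
  set C := {ω | L < |U ω|}
  set T := toMeasurable μ {ω | δ < Y ω}
  have hC : NullMeasurableSet C μ :=
    nullMeasurableSet_lt aemeasurable_const hU.abs.aemeasurable
  have hT : MeasurableSet T := measurableSet_toMeasurable _ _
  have hCint : Integrable (C.indicator fun ω => |U ω|) μ := hU.abs.indicator₀ hC
  have hTint : Integrable (T.indicator fun _ => L) μ := (integrable_const L).indicator hT
  have hbound : ∀ᵐ ω ∂μ,
      Y ω ≤ C.indicator (fun ω => |U ω|) ω + δ + T.indicator (fun _ => L) ω := by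
    filter_upwards [hYU] with ω hω
    have hTnn : 0 ≤ T.indicator (fun _ => L) ω := Set.indicator_nonneg (fun _ _ => hL) ω
    by_cases hωC : ω ∈ C
    · rw [Set.indicator_of_mem hωC]
      linarith
    by_cases hωT : δ < Y ω
    · have hωT' : ω ∈ T := subset_toMeasurable μ {ω | δ < Y ω} hωT
      rw [Set.indicator_of_notMem hωC, Set.indicator_of_mem hωT']
      have : |U ω| ≤ L := not_lt.1 hωC
      linarith
    · rw [Set.indicator_of_notMem hωC]
      linarith [not_lt.1 hωT]
  have hCδ : Integrable (fun ω => C.indicator (fun ω => |U ω|) ω + δ) μ :=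
    hCint.add (integrable_const δ)
  calc ∫ ω, Y ω ∂μ
      ≤ ∫ ω, (C.indicator (fun ω => |U ω|) ω + δ + T.indicator (fun _ => L) ω) ∂μ :=
        integral_mono_ae hY (hCδ.add hTint) hbound
    _ = _ := by
        rw [integral_add hCδ hTint, integral_add hCint (integrable_const δ),
          integral_indicator₀ hC, integral_const, integral_indicator_const L hT, smul_eq_mul,
          smul_eq_mul, measureReal_def μ T, measure_toMeasurable, ← measureReal_def]
        ring

lemma tendsto_integral_abs_of_tendstoInMeasure_of_abs_le [IsFiniteMeasure μ] {Y U : ι → Ω → ℝ}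
    (hY : ∀ i, Integrable (Y i) μ) (hU : ∀ i, Integrable (U i) μ)
    (hUunif : ∀ ε > (0 : ℝ), ∃ M > (0 : ℝ), ∀ i, ∫ ω in {ω | M < |U i ω|}, |U i ω| ∂μ < ε)
    (hYU : ∀ i, ∀ᵐ ω ∂μ, |Y i ω| ≤ |U i ω|) (hlim : TendstoInMeasure μ Y l 0) :
    Tendsto (fun i => ∫ ω, |Y i ω| ∂μ) l (𝓝 0) := by
  refine tendsto_order.2 ⟨fun a ha => Eventually.of_forall fun i =>
    ha.trans_le (integral_nonneg fun _ => abs_nonneg _), fun η hη => ?_⟩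
  obtain ⟨L, hL, hLU⟩ := hUunif (η / 3) (by positivity)
  set δ := η / (3 * (μ.real Set.univ + 1))
  have hδ : 0 < δ := by positivity
  have hδμ : δ * μ.real Set.univ < η / 3 := by
    rw [div_mul_eq_mul_div, div_lt_div_iff₀ (by positivity) (by positivity)]
    nlinarith [measureReal_nonneg (μ := μ) (s := Set.univ)]
  rw [tendstoInMeasure_iff_measureReal_norm] at hlim
  simp only [Pi.zero_apply, sub_zero, Real.norm_eq_abs] at hlim
  filter_upwards [(hlim δ hδ).eventually (gt_mem_nhds (show 0 < η / (3 * L) by positivity))]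
    with i hi
  have hL' : L * μ.real {ω | δ < |Y i ω|} < η / 3 := by
    have hsub : {ω | δ < |Y i ω|} ⊆ {ω | δ ≤ |Y i ω|} := fun _ hω => le_of_lt (α := ℝ) hω
    have := (measureReal_mono hsub).trans_lt hi
    rw [lt_div_iff₀ (by positivity)] at this
    linarith
  calc ∫ ω, |Y i ω| ∂μ
      ≤ ∫ ω in {ω | L < |U i ω|}, |U i ω| ∂μ + δ * μ.real Set.univ
        + L * μ.real {ω | δ < |Y i ω|} :=
        integral_le_setIntegral_abs_add (hY i).abs (hU i) (hYU i) hδ.le hL.le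
    _ < η := by linarith [hLU i]

lemma tendstoInMeasure_condExp_of_tendsto_integral_abs {𝒢 : ι → MeasurableSpace Ω}
    {X : ι → Ω → ℝ} (hX : Tendsto (fun i => ∫ ω, |X i ω| ∂μ) l (𝓝 0)) :
    TendstoInMeasure μ (fun i => μ[X i | 𝒢 i]) l 0 :=
  tendstoInMeasure_of_tendsto_integral_abs (fun _ => integrable_condExp) <|
    squeeze_zero (fun _ => integral_nonneg fun _ => abs_nonneg _)
      (fun i => integral_abs_condExp_le (X i)) hX

lemma Integrable.min_two_sub_one [IsFiniteMeasure μ] {r : Ω → ℝ} (hr : Integrable r μ) :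
    Integrable (fun ω => min (r ω) 2 - 1) μ :=
  (hr.sub (integrable_const 1)).mono (by fun_prop) (ae_of_all _ fun ω => by
    simpa only [Real.norm_eq_abs, Pi.sub_apply] using abs_min_two_sub_one_le (r ω))

lemma Integrable.max_sub_two_mul {u v : Ω → ℝ} (hu : Integrable u μ) (hv : ∀ᵐ ω ∂μ, 0 < v ω)
    (hvm : AEStronglyMeasurable v μ) : Integrable (fun ω => max (u ω - 2 * v ω) 0) μ :=
  hu.mono (by fun_prop) (by
    filter_upwards [hv] with ω hω
    rw [Real.norm_eq_abs, Real.norm_eq_abs, abs_of_nonneg (le_max_right _ _)]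
    exact max_sub_two_mul_le_abs hω.le)

lemma condExp_div_sub_one_ae_eq [IsFiniteMeasure μ] {m : MeasurableSpace Ω} (hm : m ≤ m0)
    {u v : Ω → ℝ} (hv : ∀ᵐ ω ∂μ, 0 < v ω) (hvm : StronglyMeasurable[m] v)
    (hu : Integrable u μ) (huv : Integrable (fun ω => u ω / v ω) μ) :
    (fun ω => μ[fun ω => u ω / v ω | m] ω - 1) =ᵐ[μ]
      μ[fun ω => min (u ω / v ω) 2 - 1 | m]
        + (fun ω => 1 / v ω) * μ[fun ω => max (u ω - 2 * v ω) 0 | m] := by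
  set r := fun ω => u ω / v ω
  set t := fun ω => min (r ω) 2 - 1
  set h := fun ω => max (u ω - 2 * v ω) 0
  have hr1 : Integrable (fun ω => r ω - 1) μ := huv.sub (integrable_const 1)
  have ht : Integrable t μ := huv.min_two_sub_one
  have hh : Integrable h μ := hu.max_sub_two_mul hv (hvm.mono hm).aestronglyMeasurable
  have hexcess : (fun ω => r ω - 1) - t =ᵐ[μ] (fun ω => 1 / v ω) * h := by
    filter_upwards [hv] with ω hω using div_sub_one_sub_min_div_two hω
  have hsub : μ[fun ω => r ω - 1 | m] =ᵐ[μ] fun ω => μ[r | m] ω - 1 := by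
    filter_upwards [condExp_sub huv (integrable_const 1) m] with ω hω
    rw [condExp_const hm] at hω
    exact hω
  have hadd : μ[fun ω => r ω - 1 | m] =ᵐ[μ] μ[t | m] + μ[(fun ω => r ω - 1) - t | m] := by
    conv_lhs => rw [← add_sub_cancel t (fun ω => r ω - 1)]
    exact condExp_add ht (hr1.sub ht) m
  have hpull : μ[(fun ω => r ω - 1) - t | m] =ᵐ[μ] (fun ω => 1 / v ω) * μ[h | m] :=
    (condExp_congr_ae hexcess).trans <| condExp_mul_of_stronglyMeasurable_left
      (stronglyMeasurable_const.div hvm) ((hr1.sub ht).congr hexcess) hh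
  filter_upwards [hsub, hadd, hpull] with ω hsubω haddω hpullω
  rw [← hsubω, haddω, Pi.add_apply, hpullω]
  rfl

end MeasureTheory

end

theorem condexp_ratio_tendsto_one_in_probability_general
    {Ω : Type*} {m0 : MeasurableSpace Ω} (P : Measure Ω) [IsProbabilityMeasure P]
    (𝒢 : ℕ → MeasurableSpace Ω) (h𝒢 : ∀ n, 𝒢 n ≤ m0)
    (U V : ℕ → Ω → ℝ)
    (hUpos : ∀ n, ∀ᵐ ω ∂P, 0 < U n ω)
    (hVpos : ∀ n, ∀ᵐ ω ∂P, 0 < V n ω)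
    (hVmeas : ∀ n, StronglyMeasurable[𝒢 n] (V n))
    (hUint : ∀ n, Integrable (U n) P)
    (hUVint : ∀ n, Integrable (fun ω => U n ω / V n ω) P)
    (hUVone : ∀ ε > (0 : ℝ),
      Tendsto (fun n => P {ω | ε < |U n ω / V n ω - 1|}) atTop (nhds 0))
    (hUunif : ∀ ε > (0 : ℝ), ∃ M > (0 : ℝ), ∀ n,
      (∫ ω in {ω | M < |U n ω|}, |U n ω| ∂P) < ε)
    (hVinvbdd : ∀ ε > (0 : ℝ), ∃ M > (0 : ℝ), ∀ n,
      P {ω | M < |1 / V n ω|} < ENNReal.ofReal ε) :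
    ∀ ε > (0 : ℝ),
      Tendsto (fun n => P {ω | ε < |(P[fun ω => U n ω / V n ω | 𝒢 n]) ω - 1|})
        atTop (nhds 0) := by
  have hR : TendstoInMeasure P (fun n ω => U n ω / V n ω - 1) atTop 0 :=
    tendstoInMeasure_zero_iff_lt_abs.2 hUVone
  have hT : TendstoInMeasure P
      (fun n => P[fun ω => min (U n ω / V n ω) 2 - 1 | 𝒢 n]) atTop 0 := by
    refine tendstoInMeasure_condExp_of_tendsto_integral_abs <|
      tendsto_integral_abs_of_tendstoInMeasure_of_abs_le (U := fun _ _ => 1)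
        (fun n => (hUVint n).min_two_sub_one) (fun _ => integrable_const 1)
        (fun ε hε => ⟨1, one_pos, fun _ => by simpa using hε⟩) (fun n => ?_)
        (hR.of_abs_le fun n => ae_of_all _ fun ω => abs_min_two_sub_one_le _)
    filter_upwards [hUpos n, hVpos n] with ω hU hV
    simpa using abs_min_two_sub_one_le_one (div_pos hU hV).le
  have hH : TendstoInMeasure P
      (fun n => P[fun ω => max (U n ω - 2 * V n ω) 0 | 𝒢 n]) atTop 0 := by
    refine tendstoInMeasure_condExp_of_tendsto_integral_abs <|
      tendsto_integral_abs_of_tendstoInMeasure_of_abs_le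
        (fun n => (hUint n).max_sub_two_mul (hVpos n) ((hVmeas n).mono (h𝒢 n)).aestronglyMeasurable)
        hUint hUunif (fun n => ?_)
        (tendstoInMeasure_zero_of_ae_support_subset
          (fun n => ?_) (hUVone 1 one_pos))
    · filter_upwards [hVpos n] with ω hV
      rw [abs_of_nonneg (le_max_right _ _)]
      exact max_sub_two_mul_le_abs hV.le
    · filter_upwards [hVpos n] with ω hV using one_lt_abs_div_sub_one_of_max_ne_zero hV
  have hsum := hT.add (hH.mul_of_boundedInProbability hVinvbdd)
  rw [add_zero] at hsum
  refine tendstoInMeasure_zero_iff_lt_abs.1 (hsum.congr_left fun n => ?_)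
  exact (condExp_div_sub_one_ae_eq (h𝒢 n) (hVpos n) (hVmeas n) (hUint n) (hUVint n)).symm

/-- Abstract form of Proposition 1: if `V_n` is `𝒢_n`-measurable, `U_n/V_n → 1` in
probability, `{U_n}` is uniformly integrable, and `(U_n)` and `(1/V_n)` are bounded in
probability, then `E[U_n/V_n | 𝒢_n] → 1` in probability. -/
theorem condexp_ratio_tendsto_one_in_probability
    {Ω : Type*} {m0 : MeasurableSpace Ω} (P : Measure Ω) [IsProbabilityMeasure P]
    (𝒢 : ℕ → MeasurableSpace Ω) (h𝒢 : ∀ n, 𝒢 n ≤ m0)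
    (U V : ℕ → Ω → ℝ)
    (hUpos : ∀ n, ∀ᵐ ω ∂P, 0 < U n ω)
    (hVpos : ∀ n, ∀ᵐ ω ∂P, 0 < V n ω)
    (hVmeas : ∀ n, StronglyMeasurable[𝒢 n] (V n))
    (hUint : ∀ n, Integrable (U n) P)
    (hUVint : ∀ n, Integrable (fun ω => U n ω / V n ω) P)
    (hUVone : ∀ ε > (0 : ℝ),
      Tendsto (fun n => P {ω | ε < |U n ω / V n ω - 1|}) atTop (nhds 0))
    (hUunif : ∀ ε > (0 : ℝ), ∃ M > (0 : ℝ), ∀ n,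
      (∫ ω in {ω | M < |U n ω|}, |U n ω| ∂P) < ε)
    (hUbdd : ∀ ε > (0 : ℝ), ∃ M > (0 : ℝ), ∀ n,
      P {ω | M < |U n ω|} < ENNReal.ofReal ε)
    (hVinvbdd : ∀ ε > (0 : ℝ), ∃ M > (0 : ℝ), ∀ n,
      P {ω | M < |1 / V n ω|} < ENNReal.ofReal ε) :
    ∀ ε > (0 : ℝ),
      Tendsto (fun n => P {ω | ε < |(P[fun ω => U n ω / V n ω | 𝒢 n]) ω - 1|})
        atTop (nhds 0) :=
  condexp_ratio_tendsto_one_in_probability_general P 𝒢 h𝒢 U V hUpos hVpos hVmeas hUint hUVint hUVone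
    hUunif hVinvbdd
end

section
/- Let p ≥ 2 be an integer, θ ∈ (−1/(p−1), 1), C = (1−θ) I_p + θ J_p the exchangeable correlation matrix, B = C⁻¹, and Ċ = J_p − I_p (the entrywise derivative of C with respect to θ). Set γ = 1 / (1 + (p−1)θ). Then (1/2) · tr( B Ċ B Ċ ) = p (p γ² − 2γ + 1) / (2 (1−θ)²). -/
open Matrix

/-!
Every matrix in sight is a combination `a • 1 + b • J`, and `J * J = p • J`, so these matrices form
a commutative algebra in which everything is computed by hand. With `γ (1 + (p - 1) θ) = 1` one checks
`C * (1 - θ γ • J) = (1 - θ) • 1`, whence `B * Ċ = (1 - θ)⁻¹ • (γ • J - 1)`; squaring gives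
`(B Ċ)² = (1 - θ)⁻² • ((p γ² - 2 γ) • J + 1)`, whose trace is `(1 - θ)⁻² p (p γ² - 2 γ + 1)`.
-/

section AllOnes

variable {R K n : Type*} [Fintype n]

theorem mul_self_of_forall_eq_one [Semiring R] {J : Matrix n n R} (hJ : ∀ i j, J i j = 1) :
    J * J = (Fintype.card n : R) • J := by
  ext i j
  simp [mul_apply, hJ]

theorem trace_of_forall_eq_one [AddCommMonoidWithOne R] {J : Matrix n n R}
    (hJ : ∀ i j, J i j = 1) : J.trace = Fintype.card n := by
  simp [trace, hJ]

variable [Field K] [DecidableEq n] {J : Matrix n n K}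

theorem exchangeable_mul_eq_smul_one (hJ : ∀ i j, J i j = 1) {θ γ : K}
    (hγ : γ * (1 + ((Fintype.card n : K) - 1) * θ) = 1) :
    ((1 - θ) • (1 : Matrix n n K) + θ • J) * (1 - (θ * γ) • J) = (1 - θ) • 1 := by
  simp only [add_mul, mul_sub, Matrix.smul_mul, Matrix.mul_smul, one_mul, mul_one,
    mul_self_of_forall_eq_one hJ, smul_smul]
  match_scalars
  · ring
  · linear_combination -θ * hγ

theorem exchangeable_inv (hJ : ∀ i j, J i j = 1) {θ γ : K} (hθ : 1 - θ ≠ 0)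
    (hγ : γ * (1 + ((Fintype.card n : K) - 1) * θ) = 1) :
    ((1 - θ) • (1 : Matrix n n K) + θ • J)⁻¹ = (1 - θ)⁻¹ • (1 - (θ * γ) • J) := by
  refine inv_eq_right_inv ?_
  rw [Matrix.mul_smul, exchangeable_mul_eq_smul_one hJ hγ, smul_smul, inv_mul_cancel₀ hθ,
    one_smul]

theorem one_sub_smul_mul_sub_one_of_forall_eq_one (hJ : ∀ i j, J i j = 1) {θ γ : K}
    (hγ : γ * (1 + ((Fintype.card n : K) - 1) * θ) = 1) :
    (1 - (θ * γ) • J) * (J - 1) = γ • J - 1 := by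
  simp only [sub_mul, mul_sub, Matrix.smul_mul, one_mul, mul_one,
    mul_self_of_forall_eq_one hJ, smul_smul]
  match_scalars
  · linear_combination -hγ
  · ring

theorem trace_smul_sub_one_mul_self (hJ : ∀ i j, J i j = 1) (γ : K) :
    ((γ • J - 1) * (γ • J - 1)).trace
      = Fintype.card n * (Fintype.card n * γ ^ 2 - 2 * γ + 1) := by
  have hsq : (γ • J - 1) * (γ • J - 1)
      = (Fintype.card n * γ ^ 2 - 2 * γ) • J + (1 : Matrix n n K) := by
    simp only [sub_mul, mul_sub, Matrix.smul_mul, Matrix.mul_smul, one_mul, mul_one,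
      mul_self_of_forall_eq_one hJ, smul_smul]
    match_scalars <;> ring
  rw [hsq, trace_add, trace_smul, trace_of_forall_eq_one hJ, trace_one, smul_eq_mul]
  ring

end AllOnes

/-- Fisher information `I_{θθ} = (1/2) tr(BĊBĊ)` for the exchangeable correlation
model: with `C = (1-θ)I + θJ`, `B = C⁻¹`, `Ċ = J - I` and `γ = 1/(1+(p-1)θ)`,
`(1/2) tr(BĊBĊ) = p (p γ² - 2γ + 1) / (2(1-θ)²)`. -/
theorem exchangeable_information_known_margins
    (p : ℕ) (hp : 2 ≤ p) (θ : ℝ)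
    (hθlo : -(1 / ((p : ℝ) - 1)) < θ) (hθhi : θ < 1)
    (J : Matrix (Fin p) (Fin p) ℝ) (hJ : ∀ i j, J i j = 1)
    (C : Matrix (Fin p) (Fin p) ℝ)
    (hC : C = (1 - θ) • (1 : Matrix (Fin p) (Fin p) ℝ) + θ • J)
    (B : Matrix (Fin p) (Fin p) ℝ) (hB : B = C⁻¹)
    (Cdot : Matrix (Fin p) (Fin p) ℝ)
    (hCdot : Cdot = J - (1 : Matrix (Fin p) (Fin p) ℝ))
    (γ : ℝ) (hγ : γ = 1 / (1 + ((p : ℝ) - 1) * θ)) :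
    (1 / 2) * (B * Cdot * B * Cdot).trace
      = (p : ℝ) * ((p : ℝ) * γ ^ 2 - 2 * γ + 1) / (2 * (1 - θ) ^ 2) := by
  have hθ : 1 - θ ≠ 0 := sub_ne_zero.mpr hθhi.ne'
  have hγ' : γ * (1 + ((Fintype.card (Fin p) : ℝ) - 1) * θ) = 1 := by
    have hp' : (1 : ℝ) < p := by exact_mod_cast hp
    have hpos : 0 < 1 + ((p : ℝ) - 1) * θ := by
      have := (lt_div_iff₀ (sub_pos.mpr hp')).mp (neg_lt.mp hθlo)
      linarith
    rw [Fintype.card_fin, hγ, one_div_mul_cancel hpos.ne']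
  have hBC : B * Cdot = (1 - θ)⁻¹ • (γ • J - 1) := by
    rw [hB, hC, hCdot, exchangeable_inv hJ hθ hγ', Matrix.smul_mul,
      one_sub_smul_mul_sub_one_of_forall_eq_one hJ hγ']
  have hsq : B * Cdot * B * Cdot = B * Cdot * (B * Cdot) := by simp only [Matrix.mul_assoc]
  rw [hsq, hBC, Matrix.smul_mul, Matrix.mul_smul, smul_smul, trace_smul,
    trace_smul_sub_one_mul_self hJ, Fintype.card_fin, smul_eq_mul]
  field_simp
end

section
/- Let p ≥ 2 be an integer, θ ∈ (−1/(p−1), 1), C = (1−θ) I_p + θ J_p the exchangeable correlation matrix, B = C⁻¹, and Ċ = J_p − I_p. Then (1/2) [ tr( B Ċ B Ċ ) − tr( B Ċ )² / p ] = p (p−1) / ( 2 ((p−1)θ + 1)² (1−θ)² ). In particular, for p = 2 this equals 1/(1−θ²)², the information bound of the bivariate normal copula model. -/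
/-!
Everything lives in the commutative algebra spanned by `I` and `J`, in which `J² = pJ`. There
`(aI + bJ)⁻¹ = a⁻¹I - b/(a(a+pb)) J`, so `BĊ = -(1-θ)⁻¹ I + cJ` with
`c = 1/((1-θ)(1+(p-1)θ))`, and for `M = sI + cJ` one has `tr(M²) - tr(M)²/p = p(p-1)c²`:
the spectrum of `M` is `s + pc` once and `s` with multiplicity `p-1`.
-/

open Matrix

namespace ExchangeableCorrelation

section

variable {K : Type*} [Field K] {n : Type*} [Fintype n]

def allOnes : Matrix n n K := of fun _ _ => 1

theorem allOnes_mul_allOnes :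
    (allOnes : Matrix n n K) * allOnes = (Fintype.card n : K) • allOnes := by
  ext i j
  simp [allOnes, mul_apply]

theorem trace_allOnes : trace (allOnes : Matrix n n K) = Fintype.card n := by
  simp [allOnes, trace]

variable [DecidableEq n]

def exchangeable (a b : K) : Matrix n n K := a • 1 + b • allOnes

theorem exchangeable_mul_exchangeable (a b c d : K) :
    (exchangeable a b : Matrix n n K) * exchangeable c d
      = exchangeable (a * c) (a * d + b * c + Fintype.card n * b * d) := by
  simp only [exchangeable, add_mul, mul_add, Matrix.smul_mul, Matrix.mul_smul, one_mul, mul_one,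
    allOnes_mul_allOnes, smul_smul]
  module

omit [Fintype n] in
theorem exchangeable_one_zero : (exchangeable 1 0 : Matrix n n K) = 1 := by
  simp [exchangeable]

theorem trace_exchangeable (a b : K) :
    trace (exchangeable a b : Matrix n n K) = Fintype.card n * (a + b) := by
  simp [exchangeable, trace_allOnes]
  ring

theorem inv_exchangeable {a b : K} (ha : a ≠ 0) (hab : a + Fintype.card n * b ≠ 0) :
    (exchangeable a b : Matrix n n K)⁻¹
      = exchangeable a⁻¹ (-(b / (a * (a + Fintype.card n * b)))) := by
  refine inv_eq_right_inv ?_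
  rw [exchangeable_mul_exchangeable, ← exchangeable_one_zero]
  congr 1
  · field_simp
  · have hab' : a + b * Fintype.card n ≠ 0 := by rwa [mul_comm]
    field_simp
    ring

omit [Fintype n] in
theorem allOnes_sub_one : (allOnes : Matrix n n K) - 1 = exchangeable (-1) 1 := by
  rw [exchangeable, neg_one_smul, one_smul, neg_add_eq_sub]

theorem inv_exchangeable_mul_allOnes_sub_one {a b : K} (ha : a ≠ 0)
    (hab : a + Fintype.card n * b ≠ 0) :
    (exchangeable a b : Matrix n n K)⁻¹ * (allOnes - 1)
      = exchangeable (-a⁻¹) ((a + b) / (a * (a + Fintype.card n * b))) := by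
  rw [inv_exchangeable ha hab, allOnes_sub_one, exchangeable_mul_exchangeable]
  have hab' : a + b * Fintype.card n ≠ 0 := by rwa [mul_comm]
  congr 1
  · ring
  · field_simp
    ring

/-- `card n` times the variance of the eigenvalues of `M`, when `M` is diagonalizable. -/
def traceDispersion (M : Matrix n n K) : K := trace (M * M) - trace M ^ 2 / Fintype.card n

theorem traceDispersion_exchangeable (a b : K) :
    traceDispersion (exchangeable a b : Matrix n n K)
      = Fintype.card n * (Fintype.card n - 1) * b ^ 2 := by
  rw [traceDispersion, exchangeable_mul_exchangeable, trace_exchangeable, trace_exchangeable]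
  rcases eq_or_ne (Fintype.card n : K) 0 with h | h
  · simp [h]
  · field_simp
    ring

end

theorem sub_one_mul_add_one_pos {p : ℕ} {θ : ℝ} (hθlo : -(1 / ((p : ℝ) - 1)) < θ)
    (hθhi : θ < 1) : 0 < ((p : ℝ) - 1) * θ + 1 := by
  rcases p with _ | _ | p
  · norm_num
    linarith
  · norm_num
  · have hq : (0 : ℝ) < (p + 2 : ℕ) - 1 := by push_cast; linarith
    have := mul_lt_mul_of_pos_left hθlo hq
    rw [mul_neg, mul_one_div_cancel hq.ne'] at this
    linarith

end ExchangeableCorrelation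

open ExchangeableCorrelation in
theorem exchangeable_efficient_information_general
    (p : ℕ) (θ : ℝ)
    (hθlo : -(1 / ((p : ℝ) - 1)) < θ) (hθhi : θ < 1)
    (J : Matrix (Fin p) (Fin p) ℝ) (hJ : ∀ i j, J i j = 1)
    (C : Matrix (Fin p) (Fin p) ℝ)
    (hC : C = (1 - θ) • (1 : Matrix (Fin p) (Fin p) ℝ) + θ • J)
    (B : Matrix (Fin p) (Fin p) ℝ) (hB : B = C⁻¹)
    (Cdot : Matrix (Fin p) (Fin p) ℝ)
    (hCdot : Cdot = J - (1 : Matrix (Fin p) (Fin p) ℝ)) :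
    (1 / 2) * ((B * Cdot * B * Cdot).trace - (B * Cdot).trace ^ 2 / p)
        = (p : ℝ) * ((p : ℝ) - 1) / (2 * (((p : ℝ) - 1) * θ + 1) ^ 2 * (1 - θ) ^ 2) ∧
    (p = 2 →
      (1 / 2) * ((B * Cdot * B * Cdot).trace - (B * Cdot).trace ^ 2 / p)
        = 1 / (1 - θ ^ 2) ^ 2) := by
  have hθ : 1 - θ ≠ 0 := by linarith
  have hpθ : θ * ((p : ℝ) - 1) + 1 ≠ 0 := by linarith [sub_one_mul_add_one_pos hθlo hθhi]
  have hJ : J = allOnes := by ext i j; simp [hJ, allOnes]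
  have hBCdot :
      B * Cdot = exchangeable (-(1 - θ)⁻¹) (1 / ((1 - θ) * (θ * ((p : ℝ) - 1) + 1))) := by
    have hpθ' : 1 - θ + Fintype.card (Fin p) * θ ≠ 0 := by
      rw [Fintype.card_fin]; convert hpθ using 1; ring
    rw [hB, hC, hCdot, hJ, ← exchangeable, inv_exchangeable_mul_allOnes_sub_one hθ hpθ',
      Fintype.card_fin]
    congr 1
    ring
  have hinfo : (1 / 2) * ((B * Cdot * B * Cdot).trace - (B * Cdot).trace ^ 2 / p)
      = (p : ℝ) * ((p : ℝ) - 1) / (2 * (((p : ℝ) - 1) * θ + 1) ^ 2 * (1 - θ) ^ 2) := by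
    have hdisp : (B * Cdot * B * Cdot).trace - (B * Cdot).trace ^ 2 / p
        = traceDispersion (B * Cdot) := by
      rw [traceDispersion, Fintype.card_fin, Matrix.mul_assoc (B * Cdot)]
    rw [hdisp, hBCdot, traceDispersion_exchangeable, Fintype.card_fin]
    field_simp
  refine ⟨hinfo, ?_⟩
  rintro rfl
  norm_num at hpθ hinfo ⊢
  have : 1 - θ ^ 2 ≠ 0 := by
    rw [show 1 - θ ^ 2 = (1 - θ) * (θ + 1) by ring]
    exact mul_ne_zero hθ hpθ
  rw [hinfo]
  field_simp
  ring

/-- Efficient Fisher information for the exchangeable correlation model: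
with `C = (1-θ)I + θJ`, `B = C⁻¹`, `Ċ = J - I`,
`(1/2)[tr(BĊBĊ) - tr(BĊ)²/p] = p(p-1) / (2((p-1)θ+1)²(1-θ)²)`; in particular, for
`p = 2` this equals `1/(1-θ²)²`. -/
theorem exchangeable_efficient_information
    (p : ℕ) (hp : 2 ≤ p) (θ : ℝ)
    (hθlo : -(1 / ((p : ℝ) - 1)) < θ) (hθhi : θ < 1)
    (J : Matrix (Fin p) (Fin p) ℝ) (hJ : ∀ i j, J i j = 1)
    (C : Matrix (Fin p) (Fin p) ℝ)
    (hC : C = (1 - θ) • (1 : Matrix (Fin p) (Fin p) ℝ) + θ • J)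
    (B : Matrix (Fin p) (Fin p) ℝ) (hB : B = C⁻¹)
    (Cdot : Matrix (Fin p) (Fin p) ℝ)
    (hCdot : Cdot = J - (1 : Matrix (Fin p) (Fin p) ℝ)) :
    (1 / 2) * ((B * Cdot * B * Cdot).trace - (B * Cdot).trace ^ 2 / p)
        = (p : ℝ) * ((p : ℝ) - 1) / (2 * (((p : ℝ) - 1) * θ + 1) ^ 2 * (1 - θ) ^ 2) ∧
    (p = 2 →
      (1 / 2) * ((B * Cdot * B * Cdot).trace - (B * Cdot).trace ^ 2 / p)
        = 1 / (1 - θ ^ 2) ^ 2) :=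
  exchangeable_efficient_information_general p θ hθlo hθhi J hJ C hC B hB Cdot hCdot
end

section
/- Let θ ∈ (−1, 1) and let C(θ) be the 4 × 4 circular correlation matrix with rows (1, θ, θ², θ), (θ, 1, θ, θ²), (θ², θ, 1, θ), (θ, θ², θ, 1), and let Ċ(θ) be its entrywise derivative in θ, the matrix with rows (0, 1, 2θ, 1), (1, 0, 1, 2θ), (2θ, 1, 0, 1), (1, 2θ, 1, 0). Then C(θ) is invertible and, with B = C(θ)⁻¹, (1/2) · tr( B Ċ B Ċ ) = 4 (1 + 2θ²) / (1 − θ²)². -/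
open Matrix

/-!
`C(θ)` and `Ċ(θ)` are symmetric circulants, and `C(θ) C(-θ) = (1 - θ²)² I`, so
`C(θ)⁻¹ = C(-θ) / (1 - θ²)²`. Multiplying out, `C(-θ) Ċ(θ) = (1 - θ²) K(θ)` with `K(θ)` the
circulant with first row `(-2θ, 1, 0, 1)`. Hence `C⁻¹ Ċ = K / (1 - θ²)` and
`tr (C⁻¹ Ċ)² = tr K² / (1 - θ²)² = 8 (1 + 2θ²) / (1 - θ²)²`.
-/

section CommRing

variable {R : Type*} [CommRing R]

def circCorr (t : R) : Matrix (Fin 4) (Fin 4) R :=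
  !![1, t, t ^ 2, t; t, 1, t, t ^ 2; t ^ 2, t, 1, t; t, t ^ 2, t, 1]

def circCorrDeriv (t : R) : Matrix (Fin 4) (Fin 4) R :=
  !![0, 1, 2 * t, 1; 1, 0, 1, 2 * t; 2 * t, 1, 0, 1; 1, 2 * t, 1, 0]

def circCorrInvDeriv (t : R) : Matrix (Fin 4) (Fin 4) R :=
  !![-2 * t, 1, 0, 1; 1, -2 * t, 1, 0; 0, 1, -2 * t, 1; 1, 0, 1, -2 * t]

theorem circCorr_mul_circCorr_neg (t : R) :
    circCorr t * circCorr (-t) = (1 - t ^ 2) ^ 2 • (1 : Matrix (Fin 4) (Fin 4) R) := by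
  ext i j
  fin_cases i <;> fin_cases j <;>
    simp [circCorr, Matrix.mul_apply, Fin.sum_univ_four] <;> ring

theorem circCorr_neg_mul_circCorrDeriv (t : R) :
    circCorr (-t) * circCorrDeriv t = (1 - t ^ 2) • circCorrInvDeriv t := by
  ext i j
  fin_cases i <;> fin_cases j <;>
    simp [circCorr, circCorrDeriv, circCorrInvDeriv, Matrix.mul_apply, Fin.sum_univ_four] <;> ring

theorem trace_circCorrInvDeriv_mul_self (t : R) :
    (circCorrInvDeriv t * circCorrInvDeriv t).trace = 8 * (1 + 2 * t ^ 2) := by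
  simp [circCorrInvDeriv, Matrix.trace, Fin.sum_univ_four]
  ring

end CommRing

section Field

variable {K : Type*} [Field K]

theorem circCorr_mul_smul_circCorr_neg {t : K} (ht : 1 - t ^ 2 ≠ 0) :
    circCorr t * (((1 - t ^ 2) ^ 2)⁻¹ • circCorr (-t)) = 1 := by
  rw [Matrix.mul_smul, circCorr_mul_circCorr_neg, smul_smul,
    inv_mul_cancel₀ (pow_ne_zero 2 ht), one_smul]

theorem inv_circCorr {t : K} (ht : 1 - t ^ 2 ≠ 0) :
    (circCorr t)⁻¹ = ((1 - t ^ 2) ^ 2)⁻¹ • circCorr (-t) :=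
  Matrix.inv_eq_right_inv (circCorr_mul_smul_circCorr_neg ht)

theorem isUnit_circCorr {t : K} (ht : 1 - t ^ 2 ≠ 0) : IsUnit (circCorr t) :=
  (Matrix.isUnit_iff_isUnit_det _).mpr
    (Matrix.isUnit_det_of_right_inverse (circCorr_mul_smul_circCorr_neg ht))

theorem inv_circCorr_mul_circCorrDeriv {t : K} (ht : 1 - t ^ 2 ≠ 0) :
    (circCorr t)⁻¹ * circCorrDeriv t = (1 - t ^ 2)⁻¹ • circCorrInvDeriv t := by
  rw [inv_circCorr ht, Matrix.smul_mul, circCorr_neg_mul_circCorrDeriv, smul_smul]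
  congr 1
  field_simp

end Field

/-- Fisher information for the 4×4 circular correlation model with first row
`(1, θ, θ², θ)`: `C(θ)` is invertible and, with `B = C(θ)⁻¹` and `Ċ` its entrywise
θ-derivative, `(1/2) tr(BĊBĊ) = 4(1+2θ²)/(1-θ²)²`. -/
theorem circular_information_known_margins
    (θ : ℝ) (hθlo : -1 < θ) (hθhi : θ < 1)
    (C : Matrix (Fin 4) (Fin 4) ℝ)
    (hC : C = !![1, θ, θ ^ 2, θ; θ, 1, θ, θ ^ 2; θ ^ 2, θ, 1, θ; θ, θ ^ 2, θ, 1])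
    (Cdot : Matrix (Fin 4) (Fin 4) ℝ)
    (hCdot : Cdot = !![0, 1, 2 * θ, 1; 1, 0, 1, 2 * θ; 2 * θ, 1, 0, 1; 1, 2 * θ, 1, 0]) :
    IsUnit C ∧
      (1 / 2) * (C⁻¹ * Cdot * C⁻¹ * Cdot).trace
        = 4 * (1 + 2 * θ ^ 2) / (1 - θ ^ 2) ^ 2 := by
  have hθ : 1 - θ ^ 2 ≠ 0 := by nlinarith
  obtain rfl : C = circCorr θ := hC
  obtain rfl : Cdot = circCorrDeriv θ := hCdot
  refine ⟨isUnit_circCorr hθ, ?_⟩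
  rw [Matrix.mul_assoc _ (circCorr θ)⁻¹, inv_circCorr_mul_circCorrDeriv hθ,
    Matrix.smul_mul, Matrix.mul_smul, smul_smul, Matrix.trace_smul,
    trace_circCorrInvDeriv_mul_self, smul_eq_mul]
  field_simp
  norm_num
end

section
/- Let θ ∈ (−1, 1), let C(θ) be the 4 × 4 circular correlation matrix with first row (1, θ, θ², θ) (symmetric circulant), let Ċ(θ) be its entrywise θ-derivative (circulant with first row (0, 1, 2θ, 1)), and let B = C(θ)⁻¹. Then (1/2) [ tr( B Ċ B Ċ ) − tr( B Ċ )² / 4 ] = 4 / (1 − θ²)². -/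
/-!
`(1 - θ²)² C⁻¹` is the circulant with first row `(1, -θ, θ², -θ)`, and multiplying it by `Ċ`
gives `B Ċ = (1 - θ²)⁻¹ (S - 2θ I)` with `S` the adjacency matrix of the 4-cycle. The bracket
`tr(X²) - tr(X)²/p` is homogeneous of degree two in `X` and invariant under `X ↦ X + c I`, so it
equals `(1 - θ²)⁻² (tr(S²) - tr(S)²/4) = 8 / (1 - θ²)²`.
-/

open Matrix

theorem trace_mul_self_sub_trace_sq_div_smul {n K : Type*} [Fintype n] [Field K]
    (c : K) (X : Matrix n n K) :
    ((c • X) * (c • X)).trace - (c • X).trace ^ 2 / Fintype.card n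
      = c ^ 2 * ((X * X).trace - X.trace ^ 2 / Fintype.card n) := by
  simp only [smul_mul_smul_comm, trace_smul, smul_eq_mul]
  ring

theorem trace_mul_self_sub_trace_sq_div_add_smul_one {n K : Type*} [Fintype n] [DecidableEq n]
    [Nonempty n] [Field K] [CharZero K] (c : K) (X : Matrix n n K) :
    ((X + c • 1) * (X + c • 1)).trace - (X + c • 1).trace ^ 2 / Fintype.card n
      = (X * X).trace - X.trace ^ 2 / Fintype.card n := by
  have hp : (Fintype.card n : K) ≠ 0 := by exact_mod_cast Fintype.card_ne_zero
  simp only [add_mul, mul_add, smul_mul_smul_comm, Matrix.mul_smul, Matrix.smul_mul, mul_one,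
    one_mul, trace_add, trace_smul, trace_one, smul_eq_mul]
  field_simp
  ring

def fourCycleAdj : Matrix (Fin 4) (Fin 4) ℝ :=
  !![0, 1, 0, 1; 1, 0, 1, 0; 0, 1, 0, 1; 1, 0, 1, 0]

theorem fourCycleAdj_trace : fourCycleAdj.trace = 0 := by
  simp [fourCycleAdj, Matrix.trace, Fin.sum_univ_four]

theorem fourCycleAdj_mul_self_trace : (fourCycleAdj * fourCycleAdj).trace = 8 := by
  simp [fourCycleAdj, Matrix.trace, Fin.sum_univ_four]
  norm_num

theorem circularCorrelation_inv {θ : ℝ} (hθ : θ ^ 2 ≠ 1) :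
    (!![1, θ, θ ^ 2, θ; θ, 1, θ, θ ^ 2; θ ^ 2, θ, 1, θ; θ, θ ^ 2, θ, 1])⁻¹
      = ((1 - θ ^ 2) ^ 2)⁻¹ •
        !![1, -θ, θ ^ 2, -θ; -θ, 1, -θ, θ ^ 2; θ ^ 2, -θ, 1, -θ; -θ, θ ^ 2, -θ, 1] := by
  have h : (1 - θ ^ 2) ^ 2 ≠ 0 := pow_ne_zero 2 (sub_ne_zero.mpr (Ne.symm hθ))
  refine inv_eq_right_inv ?_
  rw [Matrix.mul_smul, inv_smul_eq_iff₀ h]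
  ext i j
  fin_cases i <;> fin_cases j <;> simp [Matrix.mul_apply, Fin.sum_univ_four] <;> ring

theorem circularCorrelation_inv_mul_deriv {θ : ℝ} (hθ : θ ^ 2 ≠ 1) :
    (!![1, θ, θ ^ 2, θ; θ, 1, θ, θ ^ 2; θ ^ 2, θ, 1, θ; θ, θ ^ 2, θ, 1])⁻¹
        * !![0, 1, 2 * θ, 1; 1, 0, 1, 2 * θ; 2 * θ, 1, 0, 1; 1, 2 * θ, 1, 0]
      = (1 - θ ^ 2)⁻¹ • (fourCycleAdj + (-2 * θ) • 1) := by
  have h : 1 - θ ^ 2 ≠ 0 := sub_ne_zero.mpr (Ne.symm hθ)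
  rw [circularCorrelation_inv hθ, Matrix.smul_mul, pow_two, mul_inv, mul_smul]
  congr 1
  rw [inv_smul_eq_iff₀ h]
  ext i j
  fin_cases i <;> fin_cases j <;> simp [fourCycleAdj, Matrix.mul_apply, Fin.sum_univ_four] <;> ring

/-- Efficient Fisher information for the 4×4 circular correlation model with first row
`(1, θ, θ², θ)`: with `B = C(θ)⁻¹` and `Ċ` the entrywise θ-derivative,
`(1/2)[tr(BĊBĊ) - tr(BĊ)²/4] = 4/(1-θ²)²`. -/
theorem circular_efficient_information
    (θ : ℝ) (hθlo : -1 < θ) (hθhi : θ < 1)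
    (C : Matrix (Fin 4) (Fin 4) ℝ)
    (hC : C = !![1, θ, θ ^ 2, θ; θ, 1, θ, θ ^ 2; θ ^ 2, θ, 1, θ; θ, θ ^ 2, θ, 1])
    (Cdot : Matrix (Fin 4) (Fin 4) ℝ)
    (hCdot : Cdot = !![0, 1, 2 * θ, 1; 1, 0, 1, 2 * θ; 2 * θ, 1, 0, 1; 1, 2 * θ, 1, 0])
    (B : Matrix (Fin 4) (Fin 4) ℝ) (hB : B = C⁻¹) :
    (1 / 2) * ((B * Cdot * B * Cdot).trace - (B * Cdot).trace ^ 2 / 4)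
      = 4 / (1 - θ ^ 2) ^ 2 := by
  have hθ : θ ^ 2 ≠ 1 := by nlinarith
  have hBCdot : B * Cdot = (1 - θ ^ 2)⁻¹ • (fourCycleAdj + (-2 * θ) • 1) := by
    rw [hB, hC, hCdot, circularCorrelation_inv_mul_deriv hθ]
  have hcentered : (B * Cdot * (B * Cdot)).trace - (B * Cdot).trace ^ 2 / 4
      = 8 / (1 - θ ^ 2) ^ 2 := by
    rw [hBCdot, show (4 : ℝ) = Fintype.card (Fin 4) by simp,
      trace_mul_self_sub_trace_sq_div_smul, trace_mul_self_sub_trace_sq_div_add_smul_one,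
      fourCycleAdj_trace, fourCycleAdj_mul_self_trace, inv_pow]
    ring
  rw [Matrix.mul_assoc (B * Cdot), hcentered]
  ring
end
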